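/- Let q be a prime power and let f ∈ F_q[T][X] be primitive with monic leading coefficient (as a polynomial in T), irreducible as a polynomial in X over F_q(T), split completely over F_q((T)), and satisfy deg_T f ≥ 1 and deg_X f = (q+1)·deg_T f. Put r = deg_T f. Then: (i) the leading coefficient of f (as a polynomial in X) equals T^r; and (ii) for every u ∈ F_q, the constant coefficient of f(X+u) (as a polynomial in X) equals a·T^r for some a ∈ F_q^×. -/

import Mathlib

/-!
Work in `F((T))` with `|x| = exp (-ord x)`. Since `f` splits there,
`ord f(u) = ord lc + ∑_α ord (u - α)` for every `u ∈ F_q`. A root of negative order contributes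
its order to each of these `q` sums; a root of nonnegative order contributes at least `0` to each
and at least `1` to the one with `u = α(0)`. Summing over `u` and using Gauss's lemma
`ord lc + ∑_α min (0, ord α) ≥ 0` (the coefficients of `f` are polynomials in `T`) gives
`∑_u ord f(u) ≥ deg_X f - ord lc`. As `ord lc ≤ r` and every `ord f(u) ≤ r`, the equality
`deg_X f = (q + 1) r` forces `ord lc = r` and `ord f(u) = r` for all `u`, and a nonzero
polynomial of degree `≤ r` divisible by `T ^ r` is a constant multiple of `T ^ r`.
-/

open Polynomial

/-- The `T`-degree of `f ∈ F[T][X]`: the maximal `T`-degree of its coefficients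
(the variable of the inner polynomial ring plays the role of `T`). -/
noncomputable def degT {F : Type*} [Field F] (f : Polynomial (Polynomial F)) : ℕ :=
  f.support.sup fun i => (f.coeff i).natDegree

/-- View `f ∈ F[T][X]` as a polynomial in `X` over the rational function field `F(T)`. -/
noncomputable def toRat {F : Type*} [Field F] (f : Polynomial (Polynomial F)) :
    Polynomial (RatFunc F) :=
  f.map (algebraMap (Polynomial F) (RatFunc F))

/-- `f ∈ F[T][X]` splits completely (into linear factors) over the
Laurent series field `F((T))`. -/
def SplitsCompletely {F : Type*} [Field F] (f : Polynomial (Polynomial F)) : Prop :=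
  Polynomial.Splits (f.map (algebraMap (Polynomial F) (LaurentSeries F)))

theorem HahnSeries.order_multiset_prod {Γ R : Type*} [AddCommMonoid Γ] [LinearOrder Γ]
    [IsOrderedCancelAddMonoid Γ] [CommSemiring R] [NoZeroDivisors R]
    {s : Multiset (HahnSeries Γ R)} (hs : s.prod ≠ 0) :
    s.prod.order = (s.map HahnSeries.order).sum := by
  induction s using Multiset.induction_on with
  | empty => simp
  | cons a s ih =>
    rw [Multiset.prod_cons] at hs ⊢
    rw [HahnSeries.order_mul (left_ne_zero_of_mul hs) (right_ne_zero_of_mul hs),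
      ih (right_ne_zero_of_mul hs), Multiset.map_cons, Multiset.sum_cons]

namespace LaurentSeries
variable {F : Type*} [Field F]

theorem exp_neg_order_add_le {x y : LaurentSeries F} (hxy : x + y ≠ 0) :
    Real.exp (-((x + y).order : ℝ)) ≤
      max (Real.exp (-(x.order : ℝ))) (Real.exp (-(y.order : ℝ))) := by
  rw [← Real.exp_monotone.map_max, max_neg_neg, Real.exp_le_exp, neg_le_neg_iff]
  exact_mod_cast HahnSeries.min_order_le_order_add hxy

open scoped Classical in
noncomputable def tAdicAbv : AbsoluteValue (LaurentSeries F) ℝ where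
  toFun x := if x = 0 then 0 else Real.exp (-(x.order : ℝ))
  map_mul' x y := by
    by_cases hx : x = 0
    · simp [hx]
    by_cases hy : y = 0
    · simp [hy]
    simp [hx, hy, HahnSeries.order_mul hx hy, Real.exp_add, mul_comm]
  nonneg' x := by split_ifs <;> positivity
  eq_zero' x := by split_ifs with h <;> simp [h, Real.exp_ne_zero]
  add_le' x y := by
    by_cases hx : x = 0
    · simp [hx]
    by_cases hy : y = 0
    · simp [hy]
    split_ifs with hxy
    · positivity
    · exact (exp_neg_order_add_le hxy).trans (max_le_add_of_nonneg (by positivity) (by positivity))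

theorem tAdicAbv_of_ne_zero {x : LaurentSeries F} (hx : x ≠ 0) :
    tAdicAbv x = Real.exp (-(x.order : ℝ)) := if_neg hx

theorem isNonarchimedean_tAdicAbv : IsNonarchimedean (tAdicAbv (F := F)) := by
  intro x y
  by_cases hx : x = 0
  · simp [hx]
  by_cases hy : y = 0
  · simp [hy]
  by_cases hxy : x + y = 0
  · simp [hxy]
  simpa only [tAdicAbv_of_ne_zero, hx, hy, hxy, ne_eq, not_false_eq_true] using
    exp_neg_order_add_le hxy

theorem max_one_tAdicAbv (x : LaurentSeries F) :
    max 1 (tAdicAbv x) = Real.exp (-(min 0 x.order : ℤ)) := by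
  by_cases hx : x = 0
  · simp [hx]
  rw [tAdicAbv_of_ne_zero hx, ← Real.exp_zero, ← Real.exp_monotone.map_max]
  push_cast
  rw [← max_neg_neg, neg_zero]

theorem tAdicAbv_le_one {x : LaurentSeries F} (hx : 0 ≤ x.orderTop) : tAdicAbv x ≤ 1 := by
  by_cases h0 : x = 0
  · simp [h0]
  rw [tAdicAbv_of_ne_zero h0, Real.exp_le_one_iff, neg_nonpos, Int.cast_nonneg_iff,
    ← WithTop.coe_le_coe, HahnSeries.order_eq_orderTop_of_ne_zero h0]
  exact hx

theorem max_one_tAdicAbv_le_gaussNorm (α : LaurentSeries F) :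
    max 1 (tAdicAbv α) ≤ (X - C α).gaussNorm tAdicAbv 1 := by
  refine max_le ?_ ?_
  · have h := (X - C α).le_gaussNorm tAdicAbv zero_le_one 1
    rwa [coeff_sub, coeff_X_one, coeff_C_of_ne_zero one_ne_zero, sub_zero, map_one, one_mul,
      one_pow] at h
  · have h := (X - C α).le_gaussNorm tAdicAbv zero_le_one 0
    rwa [coeff_sub, coeff_X_zero, coeff_C_zero, zero_sub, map_neg_eq_map, pow_zero,
      mul_one] at h

-- Gauss's lemma for `tAdicAbv`: the Gauss norm of `p` is `|lc p| * ∏ max 1 |α|`, and it is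
-- at most `1` because the coefficients of `p` are integral.
theorem order_leadingCoeff_add_sum_min_order_roots_nonneg {p : (LaurentSeries F)[X]}
    (hp : p.Splits) (hp0 : p ≠ 0) (hint : ∀ i, 0 ≤ (p.coeff i).orderTop) :
    0 ≤ p.leadingCoeff.order + (p.roots.map fun α => min 0 α.order).sum := by
  have habv := gaussNorm_isAbsoluteValue (c := 1) (isNonarchimedean_tAdicAbv (F := F)) one_pos
  have hupper : p.gaussNorm tAdicAbv 1 ≤ 1 := by
    obtain ⟨i, hi⟩ := p.exists_eq_gaussNorm tAdicAbv 1
    rw [hi, one_pow, mul_one]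
    exact tAdicAbv_le_one (hint i)
  have hlower : tAdicAbv p.leadingCoeff * (p.roots.map fun α => max 1 (tAdicAbv α)).prod ≤
      p.gaussNorm tAdicAbv 1 := by
    conv_rhs => rw [hp.eq_prod_roots]
    have hprod (s : Multiset (LaurentSeries F)[X]) :
        s.prod.gaussNorm tAdicAbv 1 = (s.map (gaussNorm tAdicAbv 1)).prod :=
      map_multiset_prod (IsAbsoluteValue.abvHom (gaussNorm tAdicAbv (1 : ℝ))) s
    rw [IsAbsoluteValue.abv_mul (gaussNorm tAdicAbv 1), gaussNorm_C, hprod, Multiset.map_map]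
    gcongr
    exact Multiset.prod_map_le_prod_map₀ _ _ (fun _ _ => by positivity)
      fun α _ => max_one_tAdicAbv_le_gaussNorm α
  have hexp : tAdicAbv p.leadingCoeff * (p.roots.map fun α => max 1 (tAdicAbv α)).prod =
      Real.exp
        (-((p.leadingCoeff.order + (p.roots.map fun α => min 0 α.order).sum : ℤ) : ℝ)) := by
    rw [tAdicAbv_of_ne_zero (leadingCoeff_ne_zero.mpr hp0), Int.cast_add, neg_add, Real.exp_add,
      Int.cast_multiset_sum, ← Multiset.sum_map_neg, Real.exp_multiset_sum, Multiset.map_map,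
      Multiset.map_map]
    simp only [Function.comp_def, max_one_tAdicAbv]
  have h := (hexp ▸ hlower).trans hupper
  rw [Real.exp_le_one_iff, neg_nonpos] at h
  exact_mod_cast h

theorem order_eval_of_splits {p : (LaurentSeries F)[X]} (hp : p.Splits) {c : LaurentSeries F}
    (hc : p.eval c ≠ 0) :
    (p.eval c).order = p.leadingCoeff.order + (p.roots.map fun α => (c - α).order).sum := by
  rw [hp.eval_eq_prod_roots] at hc ⊢
  rw [HahnSeries.order_mul (left_ne_zero_of_mul hc) (right_ne_zero_of_mul hc),
    HahnSeries.order_multiset_prod (right_ne_zero_of_mul hc), Multiset.map_map]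
  rfl

theorem one_add_mul_min_order_le_sum_order_C_sub [Fintype F] {α : LaurentSeries F}
    (hα : ∀ u, HahnSeries.C u ≠ α) :
    1 + (Fintype.card F + 1) * min 0 α.order ≤ ∑ u : F, (HahnSeries.C u - α).order := by
  have hne (u : F) : HahnSeries.C u - α ≠ 0 := sub_ne_zero.mpr (hα u)
  have hlow (u : F) : min 0 α.order ≤ (HahnSeries.C u - α).order := by
    rw [HahnSeries.le_order_iff_forall (hne u)]
    intro j hj
    rw [HahnSeries.coeff_sub, HahnSeries.C_apply, HahnSeries.coeff_single,
      if_neg (lt_min_iff.mp hj).1.ne, HahnSeries.coeff_eq_zero_of_lt_order (lt_min_iff.mp hj).2,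
      sub_zero]
  rcases lt_or_ge α.order 0 with hneg | hnonneg
  · refine le_trans ?_ (Finset.sum_le_sum fun u _ => hlow u)
    rw [Finset.sum_const, Finset.card_univ, nsmul_eq_mul, min_eq_right hneg.le]
    linarith
  · have hclose : 1 ≤ (HahnSeries.C (α.coeff 0) - α).order := by
      rw [HahnSeries.le_order_iff_forall (hne _)]
      intro j hj
      rcases (show j ≤ 0 by omega).lt_or_eq with hj | rfl
      · rw [HahnSeries.coeff_sub, HahnSeries.C_apply, HahnSeries.coeff_single, if_neg hj.ne,
          HahnSeries.coeff_eq_zero_of_lt_order (hj.trans_le hnonneg), sub_zero]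
      · simp [HahnSeries.C_apply]
    rw [min_eq_left hnonneg, mul_zero, add_zero]
    refine hclose.trans (Finset.single_le_sum (f := fun u => (HahnSeries.C u - α).order)
      (fun u _ => ?_) (Finset.mem_univ _))
    simpa [min_eq_left hnonneg] using hlow u

theorem natDegree_sub_order_leadingCoeff_le_sum_order_eval_C [Fintype F]
    {p : (LaurentSeries F)[X]} (hp : p.Splits) (hint : ∀ i, 0 ≤ (p.coeff i).orderTop)
    (hev : ∀ u, p.eval (HahnSeries.C u) ≠ 0) :
    p.natDegree - p.leadingCoeff.order ≤ ∑ u : F, (p.eval (HahnSeries.C u)).order := by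
  have hp0 : p ≠ 0 := fun h => hev 0 (by simp [h])
  have hgauss := order_leadingCoeff_add_sum_min_order_roots_nonneg hp hp0 hint
  have hcard : (Multiset.card p.roots : ℤ) = p.natDegree := by
    exact_mod_cast splits_iff_card_roots.mp hp
  have hnot_C (α) (hα : α ∈ p.roots) (u : F) : HahnSeries.C u ≠ α := by
    rintro rfl
    exact hev u (isRoot_of_mem_roots hα)
  set q : ℤ := (Fintype.card F : ℤ)
  set d := p.leadingCoeff.order
  calc p.natDegree - d
      ≤ q * d + (p.roots.map fun α => 1 + (q + 1) * min 0 α.order).sum := by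
        rw [Multiset.sum_map_add, Multiset.map_const', Multiset.sum_replicate, nsmul_one,
          hcard, Multiset.sum_map_mul_left]
        nlinarith [mul_nonneg (show (0 : ℤ) ≤ q + 1 by positivity) hgauss]
    _ ≤ q * d + (p.roots.map fun α => ∑ u : F, (HahnSeries.C u - α).order).sum := by
        gcongr
        exact Multiset.sum_map_le_sum_map _ _ fun α hα =>
          one_add_mul_min_order_le_sum_order_C_sub (hnot_C α hα)
    _ = ∑ u : F, (d + (p.roots.map fun α => (HahnSeries.C u - α).order).sum) := by
        rw [Finset.sum_add_distrib, Multiset.sum_map_sum, Finset.sum_const, Finset.card_univ,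
          nsmul_eq_mul]
    _ = ∑ u : F, (p.eval (HahnSeries.C u)).order :=
        Finset.sum_congr rfl fun u _ => (order_eval_of_splits hp (hev u)).symm

end LaurentSeries

namespace Polynomial
variable {R : Type*} [CommSemiring R]

theorem coeff_algebraMap_laurentSeries (p : R[X]) (i : ℤ) :
    (algebraMap R[X] (LaurentSeries R) p).coeff i = if i < 0 then 0 else p.coeff i.natAbs := by
  simp [PowerSeries.coeff_coe, Polynomial.coeff_coe]

theorem eval_map_algebraMap_laurentSeries_C (f : R[X][X]) (u : R) :
    (f.map (algebraMap R[X] (LaurentSeries R))).eval (HahnSeries.C u) =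
      algebraMap R[X] (LaurentSeries R) (f.eval (C u)) := by
  rw [eval_map, ← eval₂_at_apply]
  simp

theorem orderTop_algebraMap_laurentSeries_nonneg (p : R[X]) :
    0 ≤ (algebraMap R[X] (LaurentSeries R) p).orderTop := by
  rw [HahnSeries.le_orderTop_iff_forall]
  intro i hi
  rw [coeff_algebraMap_laurentSeries, if_pos (by exact_mod_cast hi)]

theorem order_algebraMap_laurentSeries_le_natDegree {p : R[X]} (hp : p ≠ 0) :
    (algebraMap R[X] (LaurentSeries R) p).order ≤ p.natDegree := by
  apply HahnSeries.order_le_of_coeff_ne_zero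
  simpa [coeff_algebraMap_laurentSeries] using hp

theorem eq_C_leadingCoeff_mul_X_pow_of_le_order {p : R[X]} {r : ℕ} (hle : p.natDegree ≤ r)
    (hr : r ≤ (algebraMap R[X] (LaurentSeries R) p).order) : p = C p.leadingCoeff * X ^ r := by
  rcases eq_or_ne p 0 with rfl | hp
  · simp
  have hdeg : p.natDegree = r :=
    le_antisymm hle (by exact_mod_cast hr.trans (order_algebraMap_laurentSeries_le_natDegree hp))
  ext k
  rw [coeff_C_mul_X_pow]
  split_ifs with hk
  · rw [hk, ← hdeg, leadingCoeff]
  rcases (Ne.lt_or_gt hk) with hk | hk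
  · have h := HahnSeries.coeff_eq_zero_of_lt_order (lt_of_lt_of_le (Int.ofNat_lt.mpr hk) hr)
    simpa [coeff_algebraMap_laurentSeries] using h
  · exact coeff_eq_zero_of_natDegree_lt (hdeg ▸ hk)

end Polynomial

section TDegree
variable {F : Type*} [Field F]

theorem natDegree_coeff_le_degT (f : F[X][X]) (i : ℕ) : (f.coeff i).natDegree ≤ degT f := by
  by_cases h : f.coeff i = 0
  · simp [h]
  · exact Finset.le_sup (f := fun i => (f.coeff i).natDegree) (mem_support_iff.mpr h)

theorem natDegree_eval_C_le_degT (f : F[X][X]) (u : F) : (f.eval (C u)).natDegree ≤ degT f := by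
  rw [eval_eq_sum_range]
  refine natDegree_sum_le_of_forall_le _ _ fun i _ => ?_
  rw [← C_pow]
  exact (natDegree_mul_C_le _ _).trans (natDegree_coeff_le_degT f i)

theorem eval_ne_zero_of_irreducible_toRat {f : F[X][X]} (hirr : Irreducible (toRat f))
    (hdeg : 1 < f.natDegree) (x : F[X]) : f.eval x ≠ 0 := by
  intro h
  have hroot : (toRat f).IsRoot (algebraMap F[X] (RatFunc F) x) := by
    rw [IsRoot, toRat, eval_map, eval₂_at_apply, h, map_zero]
  have hlin : (toRat f).natDegree = 1 :=
    natDegree_eq_of_degree_eq_some (degree_eq_one_of_irreducible_of_root hirr hroot)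
  rw [toRat, natDegree_map_eq_of_injective (RatFunc.algebraMap_injective F)] at hlin
  omega

theorem order_leadingCoeff_eq_degT_and_order_eval_C_eq_degT [Fintype F] {f : F[X][X]}
    (hsplit : SplitsCompletely f) (hev : ∀ u, f.eval (C u) ≠ 0)
    (hdeg : f.natDegree = (Fintype.card F + 1) * degT f) :
    (algebraMap F[X] (LaurentSeries F) f.leadingCoeff).order = degT f ∧
      ∀ u, (algebraMap F[X] (LaurentSeries F) (f.eval (C u))).order = degT f := by
  have hinj : Function.Injective (algebraMap F[X] (LaurentSeries F)) :=
    algebraMap_hahnSeries_injective ℤ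
  have hf0 : f ≠ 0 := fun h => hev 0 (by simp [h])
  have hcore := LaurentSeries.natDegree_sub_order_leadingCoeff_le_sum_order_eval_C hsplit
    (fun i => by rw [coeff_map]; exact orderTop_algebraMap_laurentSeries_nonneg _)
    (fun u => by
      rw [eval_map_algebraMap_laurentSeries_C]
      exact (map_ne_zero_iff _ hinj).mpr (hev u))
  simp only [natDegree_map_eq_of_injective hinj, leadingCoeff_map_of_injective hinj,
    eval_map_algebraMap_laurentSeries_C] at hcore
  set ι := algebraMap F[X] (LaurentSeries F)
  have hle (u : F) : (ι (f.eval (C u))).order ≤ degT f :=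
    (order_algebraMap_laurentSeries_le_natDegree (hev u)).trans
      (by exact_mod_cast natDegree_eval_C_le_degT f u)
  have hlc : (ι f.leadingCoeff).order ≤ degT f :=
    (order_algebraMap_laurentSeries_le_natDegree (leadingCoeff_ne_zero.mpr hf0)).trans
      (by exact_mod_cast natDegree_coeff_le_degT f f.natDegree)
  have hsum_le : ∑ u : F, (ι (f.eval (C u))).order ≤ ∑ _u : F, (degT f : ℤ) :=
    Finset.sum_le_sum fun u _ => hle u
  rw [Finset.sum_const, Finset.card_univ, nsmul_eq_mul] at hsum_le
  rw [hdeg] at hcore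
  push_cast at hcore
  have hd : (ι f.leadingCoeff).order = degT f := by nlinarith
  refine ⟨hd, fun u => ?_⟩
  have hsum : ∑ u : F, (ι (f.eval (C u))).order = ∑ _u : F, (degT f : ℤ) := by
    rw [Finset.sum_const, Finset.card_univ, nsmul_eq_mul]
    linarith
  exact (Finset.sum_eq_sum_iff_of_le fun u _ => hle u).mp hsum u (Finset.mem_univ u)

end TDegree

theorem minimal_height_coefficients_general {F : Type*} [Field F] [Fintype F]
    (f : Polynomial (Polynomial F))
    (hmon : f.leadingCoeff.Monic)
    (hirr : Irreducible (toRat f))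
    (hsplit : SplitsCompletely f)
    (hT : 1 ≤ degT f)
    (hdeg : f.natDegree = (Fintype.card F + 1) * degT f) :
    f.leadingCoeff = Polynomial.X ^ degT f ∧
      ∀ u : F, ∃ a : F, a ≠ 0 ∧
        (f.comp (Polynomial.X + Polynomial.C (Polynomial.C u))).coeff 0
          = Polynomial.C a * Polynomial.X ^ degT f := by
  have hnonlinear : 1 < f.natDegree := by
    rw [hdeg]
    nlinarith [Fintype.card_pos (α := F)]
  have hev (u : F) : f.eval (C u) ≠ 0 := eval_ne_zero_of_irreducible_toRat hirr hnonlinear _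
  obtain ⟨hlc, hval⟩ := order_leadingCoeff_eq_degT_and_order_eval_C_eq_degT hsplit hev hdeg
  refine ⟨?_, fun u => ⟨_, leadingCoeff_ne_zero.mpr (hev u), ?_⟩⟩
  · simpa [hmon.leadingCoeff] using eq_C_leadingCoeff_mul_X_pow_of_le_order
      (natDegree_coeff_le_degT f f.natDegree) hlc.ge
  · rw [coeff_zero_eq_eval_zero, eval_comp]
    simpa using eq_C_leadingCoeff_mul_X_pow_of_le_order (natDegree_eval_C_le_degT f u) (hval u).ge

/-- Leading and constant coefficients of the minimal polynomial of a totally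
$T$-adic function of minimal height $1/(q+1)$: the leading coefficient (in $X$)
equals $T^r$ and, for each $u ∈ F_q$, the constant coefficient of $f(X+u)$ equals
$a·T^r$ for some nonzero $a ∈ F_q$, where $r = \deg_T f$. -/
theorem minimal_height_coefficients {F : Type*} [Field F] [Fintype F]
    (f : Polynomial (Polynomial F)) (hprim : f.IsPrimitive)
    (hmon : f.leadingCoeff.Monic)
    (hirr : Irreducible (toRat f))
    (hsplit : SplitsCompletely f)
    (hT : 1 ≤ degT f)
    (hdeg : f.natDegree = (Fintype.card F + 1) * degT f) :
    f.leadingCoeff = Polynomial.X ^ degT f ∧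
      ∀ u : F, ∃ a : F, a ≠ 0 ∧
        (f.comp (Polynomial.X + Polynomial.C (Polynomial.C u))).coeff 0
          = Polynomial.C a * Polynomial.X ^ degT f :=
  minimal_height_coefficients_general f hmon hirr hsplit hT hdeg
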